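/- Let G be a connected graph with at least one edge and H a proper subgraph of G with at least one edge. Then γ(H) < γ(G), where γ denotes the largest real zero of the adjoint polynomial. -/

import Mathlib

open Polynomial

/-- A clique cover of `G`: a partition of the vertex set into parts each inducing a clique. -/
def SimpleGraph.IsCliqueCover {V : Type*} [Fintype V] [DecidableEq V] (G : SimpleGraph V)
    (P : Finpartition (Finset.univ : Finset V)) : Prop :=
  ∀ p ∈ P.parts, G.IsClique (p : Set V)

/-- `a_k(G)`: the number of clique covers of `G` with exactly `k` parts. -/
noncomputable def numCliqueCovers {V : Type*} [Fintype V] [DecidableEq V] (G : SimpleGraph V)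
    (k : ℕ) : ℕ :=
  {P : Finpartition (Finset.univ : Finset V) | G.IsCliqueCover P ∧ P.parts.card = k}.ncard

/-- A finset of vertices is independent: pairwise non-adjacent. -/
def SimpleGraph.IsIndepFinset {W : Type*} (H : SimpleGraph W) (s : Finset W) : Prop :=
  ∀ v ∈ s, ∀ w ∈ s, ¬ H.Adj v w

/-- `i_k(H)`: the number of independent sets of size `k` in `H`. -/
noncomputable def numIndepSets {W : Type*} (H : SimpleGraph W) (k : ℕ) : ℕ :=
  {s : Finset W | H.IsIndepFinset s ∧ s.card = k}.ncard

/-- The auxiliary one-sided relation in the construction of `Ĝ`: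
for edges `e = (u_i,u_j)`, `f = (u_k,u_l)` with `j ≤ l`, they are related iff
`i = k`, or `j = k`, or (`j = l` and `u_i, u_k` non-adjacent). -/
def hatRel {n : ℕ} (G : SimpleGraph (Fin n)) (e f : Fin n × Fin n) : Prop :=
  e.2 ≤ f.2 ∧ (e.1 = f.1 ∨ e.2 = f.1 ∨ (e.2 = f.2 ∧ ¬ G.Adj e.1 f.1))

/-- The graph `Ĝ` associated to `G` with its vertex ordering: vertices are the
edges `(u_i,u_j)` with `i < j`. -/
def hatGraph {n : ℕ} (G : SimpleGraph (Fin n)) :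
    SimpleGraph {p : Fin n × Fin n // p.1 < p.2 ∧ G.Adj p.1 p.2} where
  Adj e f := e ≠ f ∧ (hatRel G e.1 f.1 ∨ hatRel G f.1 e.1)
  symm := ⟨fun e f h => ⟨h.1.symm, h.2.symm⟩⟩
  loopless := ⟨fun e h => h.1 rfl⟩

/-- The independence polynomial `I(H,x) = Σ_k (-1)^k i_k(H) x^k` (over `ℝ`). -/
noncomputable def indepPoly {W : Type*} [Fintype W] (H : SimpleGraph W) : Polynomial ℝ :=
  ∑ k ∈ Finset.range (Fintype.card W + 1), C ((-1 : ℝ) ^ k * (numIndepSets H k : ℝ)) * X ^ k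

/-- The adjoint polynomial `h(G,x) = Σ_k (-1)^{n-k} a_k(G) x^k` (over `ℝ`). -/
noncomputable def adjPoly {V : Type*} [Fintype V] [DecidableEq V] (G : SimpleGraph V) :
    Polynomial ℝ :=
  ∑ k ∈ Finset.range (Fintype.card V + 1),
    C ((-1 : ℝ) ^ (Fintype.card V - k) * (numCliqueCovers G k : ℝ)) * X ^ k

/-- `h*(G,x) = x^n h(G,1/x) = Σ_k (-1)^k a_{n-k}(G) x^k` (over `ℝ`). -/
noncomputable def hStarPoly {V : Type*} [Fintype V] [DecidableEq V] (G : SimpleGraph V) :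
    Polynomial ℝ :=
  ∑ k ∈ Finset.range (Fintype.card V + 1),
    C ((-1 : ℝ) ^ k * (numCliqueCovers G (Fintype.card V - k) : ℝ)) * X ^ k

/-- Integer version of the independence polynomial. -/
noncomputable def indepPolyZ {W : Type*} [Fintype W] (H : SimpleGraph W) : Polynomial ℤ :=
  ∑ k ∈ Finset.range (Fintype.card W + 1), C ((-1 : ℤ) ^ k * (numIndepSets H k : ℤ)) * X ^ k

/-- Integer version of `h*`. -/
noncomputable def hStarPolyZ {V : Type*} [Fintype V] [DecidableEq V] (G : SimpleGraph V) :
    Polynomial ℤ :=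
  ∑ k ∈ Finset.range (Fintype.card V + 1),
    C ((-1 : ℤ) ^ k * (numCliqueCovers G (Fintype.card V - k) : ℤ)) * X ^ k

/-- A finset of edges forming a matching in `G`. -/
def SimpleGraph.IsMatchingFinset {V : Type*} (G : SimpleGraph V) (s : Finset (Sym2 V)) : Prop :=
  (↑s : Set (Sym2 V)) ⊆ G.edgeSet ∧
    ∀ e ∈ s, ∀ f ∈ s, e ≠ f → ∀ v, ¬(v ∈ e ∧ v ∈ f)

/-- `m_k(G)`: number of matchings of size `k`. -/
noncomputable def numMatchings {V : Type*} (G : SimpleGraph V) (k : ℕ) : ℕ :=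
  {s : Finset (Sym2 V) | G.IsMatchingFinset s ∧ s.card = k}.ncard

/-- The matching polynomial `M(G,x) = Σ_k (-1)^k m_k(G) x^{n-k}` (over `ℝ`). -/
noncomputable def matchPoly {V : Type*} [Fintype V] (G : SimpleGraph V) : Polynomial ℝ :=
  ∑ k ∈ Finset.range (Fintype.card V + 1),
    C ((-1 : ℝ) ^ k * (numMatchings G k : ℝ)) * X ^ (Fintype.card V - k)

/-- The line graph `L(G)`: vertices are the edges of `G`, adjacent iff distinct and
sharing an endpoint. -/
def lineGraph' {V : Type*} (G : SimpleGraph V) : SimpleGraph G.edgeSet where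
  Adj e f := e ≠ f ∧ ∃ v, v ∈ (e : Sym2 V) ∧ v ∈ (f : Sym2 V)
  symm := ⟨fun e f h => ⟨h.1.symm, h.2.choose, h.2.choose_spec.2, h.2.choose_spec.1⟩⟩
  loopless := ⟨fun e h => h.1 rfl⟩

/-- `H ∪ K₁`: the disjoint union of `H` with one isolated vertex. -/
def addIsolated {V : Type*} (H : SimpleGraph V) : SimpleGraph (V ⊕ Unit) where
  Adj x y := ∃ a b, x = Sum.inl a ∧ y = Sum.inl b ∧ H.Adj a b
  symm := ⟨by rintro x y ⟨a, b, rfl, rfl, h⟩; exact ⟨b, a, rfl, rfl, h.symm⟩⟩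
  loopless := ⟨by rintro x ⟨a, b, rfl, h, hadj⟩; cases Sum.inl_injective h; exact hadj.ne rfl⟩

/-- `b` is the smallest zero of `p` in `(0,1]`. -/
def IsBetaZero (p : Polynomial ℝ) (b : ℝ) : Prop :=
  b ∈ Set.Ioc (0 : ℝ) 1 ∧ p.eval b = 0 ∧ ∀ y ∈ Set.Ioc (0 : ℝ) 1, p.eval y = 0 → b ≤ y

/-- `g` is the largest real zero of `p`. -/
def IsGammaZero (p : Polynomial ℝ) (g : ℝ) : Prop :=
  p.eval g = 0 ∧ ∀ y : ℝ, p.eval y = 0 → y ≤ g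

/-!
For `U ⊆ V` let `Z_G(U, x) = ∑_S ∏_{C ∈ S} (-x) ^ (|C| - 1)`, summed over the families `S` of
disjoint cliques of size at least two inside `U`. Completing such a family by singletons gives the
clique covers, so `h(G, t) = t ^ n Z_G(V, 1 / t)`. Let `β(G)` be the supremum of the `x` for which
every `Z_G(W, ·)` is positive on `[0, x]`. Then every positive zero of `h(H, ·)` is at most
`1 / β(H)`, and `1 / β(G)` is a zero of `h(G, ·)` once we know that `Z_G(V, β(G)) = 0`; so it
remains to show this and `β(G) < β(H)`.

Deleting an edge `pq` adds `x Z_K(U - q, x)` to `Z_G(U, x)`, where `K ≤ G` has fewer edges. By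
induction on edges, positivity on `[0, x]` therefore passes to subgraphs, and `β` is antitone.
For connected `G`, no proper `W` has `Z_G(W, β(G)) = 0`: for an edge `ac` leaving a minimal such
`W`, cutting the other edges at `c` and then `ac` itself shows `Z_G(W + c, β(G)) < 0`. Hence after
deleting an edge `pq` of `G` missing from `H`, every `Z(W, ·)` is still positive at `β(G)`, and
`β(G) < β(G - pq) ≤ β(H)`.
-/

open Finset

lemma nonneg_of_pos_on_Ico {f : ℝ → ℝ} (hf : Continuous f) {b : ℝ} (hb : 0 < b)
    (h : ∀ y ∈ Set.Ico 0 b, 0 < f y) : 0 ≤ f b :=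
  ge_of_tendsto (hf.continuousAt.tendsto.mono_left nhdsWithin_le_nhds)
    (Filter.eventually_of_mem (Ioo_mem_nhdsLT hb) fun y hy => (h y ⟨hy.1.le, hy.2⟩).le)

namespace Finpartition

variable {α : Type*} [DecidableEq α] {s : Finset α}

def nontrivialParts (P : Finpartition s) : Finset (Finset α) :=
  {t ∈ P.parts | 2 ≤ #t}

lemma mem_nontrivialParts {P : Finpartition s} {t : Finset α} :
    t ∈ P.nontrivialParts ↔ t ∈ P.parts ∧ 2 ≤ #t :=
  mem_filter

lemma parts_eq_nontrivialParts_union (P : Finpartition s) :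
    P.parts = P.nontrivialParts ∪ (s \ P.nontrivialParts.sup id).image singleton := by
  ext t
  simp only [mem_union, mem_nontrivialParts, mem_image, mem_sdiff, mem_sup, id, not_exists,
    not_and]
  constructor
  · intro ht
    by_cases h2 : 2 ≤ #t
    · exact Or.inl ⟨ht, h2⟩
    obtain ⟨v, rfl⟩ : ∃ v, t = {v} :=
      card_eq_one.mp (by have := card_pos.mpr (P.nonempty_of_mem_parts ht); omega)
    refine Or.inr ⟨v, ⟨P.subset ht (mem_singleton_self v), fun C hC hvC => ?_⟩, rfl⟩
    obtain rfl := P.eq_of_mem_parts hC.1 ht hvC (mem_singleton_self v)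
    simp at hC
  · rintro (⟨ht, -⟩ | ⟨v, ⟨hv, hvS⟩, rfl⟩)
    · exact ht
    obtain ⟨C, hC, hvC⟩ := P.exists_mem hv
    have hC1 : #C ≤ 1 := by
      by_contra! h
      exact hvS C ⟨hC, h⟩ hvC
    obtain rfl : C = {v} :=
      eq_singleton_iff_unique_mem.mpr ⟨hvC, fun w hw => card_le_one.mp hC1 w hw v hvC⟩
    exact hC

def ofNontrivialParts (S : Finset (Finset α)) (hS : ∀ t ∈ S, t ⊆ s ∧ 2 ≤ #t)
    (hd : (S : Set (Finset α)).PairwiseDisjoint id) : Finpartition s where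
  parts := S ∪ (s \ S.sup id).image singleton
  supIndep := by
    rw [supIndep_iff_pairwiseDisjoint, coe_union]
    refine hd.union ?_ ?_
    · rw [coe_image]
      rintro _ ⟨v, -, rfl⟩ _ ⟨w, -, rfl⟩ hvw
      exact disjoint_singleton.mpr fun h => hvw (h ▸ rfl)
    · intro C hC t ht _
      obtain ⟨v, hv, rfl⟩ := mem_image.mp (mem_coe.mp ht)
      rw [mem_sdiff, mem_sup] at hv
      exact disjoint_singleton_right.mpr fun hvC => hv.2 ⟨C, hC, hvC⟩
  sup_parts := by
    rw [sup_union, sup_image, Function.id_comp, sup_singleton_eq_self, sup_eq_union,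
      union_sdiff_of_subset]
    exact Finset.sup_le fun t ht => (hS t ht).1
  bot_notMem := by
    simp only [bot_eq_empty, mem_union, mem_image, not_or, not_exists, not_and]
    exact ⟨fun h => by simpa using (hS ∅ h).2, fun v _ => singleton_ne_empty v⟩

lemma nontrivialParts_ofNontrivialParts {S : Finset (Finset α)} (hS : ∀ t ∈ S, t ⊆ s ∧ 2 ≤ #t)
    (hd : (S : Set (Finset α)).PairwiseDisjoint id) :
    (ofNontrivialParts S hS hd).nontrivialParts = S := by
  rw [nontrivialParts, ofNontrivialParts, filter_union,
    filter_true_of_mem fun t ht => (hS t ht).2, filter_false_of_mem fun _ ht => ?_, union_empty]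
  obtain ⟨v, -, rfl⟩ := mem_image.mp ht
  simp

lemma ofNontrivialParts_nontrivialParts (P : Finpartition s) :
    ofNontrivialParts P.nontrivialParts
      (fun _ ht => ⟨P.le (mem_filter.mp ht).1, (mem_filter.mp ht).2⟩)
      (P.supIndep.pairwiseDisjoint.subset (filter_subset _ _)) = P :=
  Finpartition.ext P.parts_eq_nontrivialParts_union.symm

lemma card_parts_add_sum_nontrivialParts (P : Finpartition s) :
    #P.parts + ∑ t ∈ P.nontrivialParts, (#t - 1) = #s := by
  rw [nontrivialParts, sum_filter_of_ne fun t _ h => by omega, ← P.sum_card_parts,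
    card_eq_sum_ones, ← sum_add_distrib]
  refine sum_congr rfl fun t ht => ?_
  have := card_pos.mpr (P.nonempty_of_mem_parts ht)
  omega

end Finpartition

namespace SimpleGraph

variable {V : Type*} {G G' : SimpleGraph V} {U : Finset V}

/-- A clique cover of `U` is recorded by its blocks, the cliques of size at least two; the other
vertices are singleton parts. -/
def IsBlock (G : SimpleGraph V) (U C : Finset V) : Prop :=
  C ⊆ U ∧ 2 ≤ #C ∧ G.IsClique (C : Set V)

def IsCliqueSystem (G : SimpleGraph V) (U : Finset V) (S : Finset (Finset V)) : Prop :=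
  (∀ C ∈ S, G.IsBlock U C) ∧ (S : Set (Finset V)).PairwiseDisjoint id

lemma IsBlock.nonempty {C : Finset V} (h : G.IsBlock U C) : C.Nonempty :=
  card_pos.mp (by have := h.2.1; omega)

/-- Removing `q` from the cliques of `G` through `p` and `q` gives the cliques of this graph
through `p`. -/
def contractCommon (G : SimpleGraph V) (p q : V) : SimpleGraph V where
  Adj a b := G.Adj a b ∧ a ≠ q ∧ b ≠ q ∧ (a = p → G.Adj q b) ∧ (b = p → G.Adj q a)
  symm := ⟨fun _ _ h => ⟨h.1.symm, h.2.2.1, h.2.1, h.2.2.2.2, h.2.2.2.1⟩⟩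
  loopless := ⟨fun _ h => h.1.ne rfl⟩

@[simp]
lemma contractCommon_adj {p q a b : V} : (G.contractCommon p q).Adj a b ↔
    G.Adj a b ∧ a ≠ q ∧ b ≠ q ∧ (a = p → G.Adj q b) ∧ (b = p → G.Adj q a) :=
  Iff.rfl

lemma contractCommon_le_deleteIncidenceSet (G : SimpleGraph V) (p q : V) :
    G.contractCommon p q ≤ G.deleteIncidenceSet q :=
  fun _ _ ⟨h, ha, hb, _⟩ => deleteIncidenceSet_adj.mpr ⟨h, ha, hb⟩

lemma contractCommon_le (G : SimpleGraph V) (p q : V) : G.contractCommon p q ≤ G :=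
  (G.contractCommon_le_deleteIncidenceSet p q).trans (G.deleteIncidenceSet_le q)

lemma contractCommon_adj_iff {p q a b : V} (ha : a ∉ ({p, q} : Set V))
    (hb : b ∉ ({p, q} : Set V)) : (G.contractCommon p q).Adj a b ↔ G.Adj a b := by
  simp only [Set.mem_insert_iff, Set.mem_singleton_iff, not_or] at ha hb
  simp [ha.1, ha.2, hb.1, hb.2]

lemma exists_adj_not_adj_of_lt {K : SimpleGraph V} (h : K < G) :
    ∃ p q, G.Adj p q ∧ ¬K.Adj p q := by
  by_contra! h'
  exact h.not_ge fun a b => h' a b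

lemma deleteEdges_lt_of_adj {p q : V} (h : G.Adj p q) : G.deleteEdges {s(p, q)} < G :=
  (deleteEdges_le _).lt_of_ne fun he => by
    have h' : (G.deleteEdges {s(p, q)}).Adj p q := by rw [he]; exact h
    simp at h'

lemma deleteIncidenceSet_lt_of_adj {p q : V} (h : G.Adj p q) : G.deleteIncidenceSet q < G :=
  (deleteIncidenceSet_le G q).lt_of_ne fun he => by
    have h' : (G.deleteIncidenceSet q).Adj p q := by rw [he]; exact h
    simp [deleteIncidenceSet_adj] at h'

lemma le_deleteEdges_of_not_adj {K : SimpleGraph V} {p q : V} (hKG : K ≤ G) (h : ¬K.Adj p q) :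
    K ≤ G.deleteEdges {s(p, q)} :=
  fun _ _ hab => deleteEdges_adj.mpr ⟨hKG hab, fun he =>
    h (K.mem_edgeSet.mp (Set.mem_singleton_iff.mp he ▸ K.mem_edgeSet.mpr hab))⟩

section DecidableEq

variable [DecidableEq V]

lemma IsCliqueSystem.insert {C : Finset V} {S : Finset (Finset V)} (hC : G.IsBlock U C)
    (hS : G.IsCliqueSystem (U \ C) S) : G.IsCliqueSystem U (insert C S) := by
  refine ⟨?_, ?_⟩
  · simp only [mem_insert, forall_eq_or_imp]
    exact ⟨hC, fun D hD => ⟨(hS.1 D hD).1.trans sdiff_subset, (hS.1 D hD).2⟩⟩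
  · rw [coe_insert]
    exact hS.2.insert fun D hD _ => (subset_sdiff.mp (hS.1 D hD).1).2.symm

lemma IsCliqueSystem.erase {C : Finset V} {S : Finset (Finset V)} (hS : G.IsCliqueSystem U S)
    (hC : C ∈ S) : G.IsCliqueSystem (U \ C) (S.erase C) := by
  refine ⟨fun D hD => ?_, hS.2.subset (by simp)⟩
  obtain ⟨hDC, hDS⟩ := mem_erase.mp hD
  exact ⟨subset_sdiff.mpr ⟨(hS.1 D hDS).1, hS.2 hDS hC hDC⟩, (hS.1 D hDS).2⟩

lemma notMem_of_isCliqueSystem_sdiff {C : Finset V} {S : Finset (Finset V)}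
    (hC : C.Nonempty) (hS : G.IsCliqueSystem (U \ C) S) : C ∉ S := fun hCS => by
  obtain ⟨v, hv⟩ := hC
  exact (mem_sdiff.mp ((hS.1 C hCS).1 hv)).2 hv

lemma isClique_contractCommon_iff {p q : V} (hpq : G.Adj p q) {C : Finset V} (hp : p ∈ C)
    (hq : q ∉ C) : (G.contractCommon p q).IsClique (C : Set V) ↔
      G.IsClique (insert q C : Finset V) := by
  have hCq {a} (ha : a ∈ C) : a ≠ q := ne_of_mem_of_not_mem ha hq
  rw [coe_insert, isClique_insert]
  constructor
  · intro h
    refine ⟨h.mono (G.contractCommon_le p q), fun b hb hqb => ?_⟩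
    by_cases hbp : b = p
    · exact hbp ▸ hpq.symm
    · exact (contractCommon_adj.mp (h hp hb (Ne.symm hbp))).2.2.2.1 rfl
  · rintro ⟨h, hq'⟩ a ha b hb hab
    exact contractCommon_adj.mpr ⟨h ha hb hab, hCq ha, hCq hb, fun _ => hq' b hb (hCq hb).symm,
      fun _ => hq' a ha (hCq ha).symm⟩

lemma isClique_deleteEdges_pair_iff {p q : V} (hpq : p ≠ q) {C : Finset V} :
    (G.deleteEdges {s(p, q)}).IsClique (C : Set V) ↔ G.IsClique (C : Set V) ∧ ¬{p, q} ⊆ C := by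
  simp only [isClique_iff, Set.Pairwise, deleteEdges_adj, Set.mem_singleton_iff, mem_coe,
    insert_subset_iff, singleton_subset_iff]
  constructor
  · exact fun h => ⟨fun a ha b hb hab => (h ha hb hab).1, fun ⟨hp, hq⟩ => (h hp hq hpq).2 rfl⟩
  · rintro ⟨h, hpq'⟩ a ha b hb hab
    refine ⟨h ha hb hab, fun he => hpq' ?_⟩
    rcases Sym2.eq_iff.mp he with ⟨rfl, rfl⟩ | ⟨rfl, rfl⟩
    exacts [⟨ha, hb⟩, ⟨hb, ha⟩]

end DecidableEq

section Fintype

variable [Fintype V] {x : ℝ}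

open scoped Classical in
noncomputable def cliqueSystems (G : SimpleGraph V) (U : Finset V) : Finset (Finset (Finset V)) :=
  {S | G.IsCliqueSystem U S}

/-- `cliqueSum G U x = x ^ #U * h(G[U], 1 / x)`; see `eval_adjPoly`. -/
noncomputable def cliqueSum (G : SimpleGraph V) (U : Finset V) (x : ℝ) : ℝ :=
  ∑ S ∈ G.cliqueSystems U, ∏ C ∈ S, (-x) ^ (#C - 1)

@[simp]
lemma mem_cliqueSystems {S : Finset (Finset V)} :
    S ∈ G.cliqueSystems U ↔ G.IsCliqueSystem U S := by
  simp [cliqueSystems]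

lemma continuous_cliqueSum (G : SimpleGraph V) (U : Finset V) : Continuous (G.cliqueSum U) := by
  unfold cliqueSum
  fun_prop

open scoped Classical in
noncomputable def blocks (G : SimpleGraph V) (U : Finset V) : Finset (Finset V) :=
  {C | G.IsBlock U C}

@[simp]
lemma mem_blocks {C : Finset V} : C ∈ G.blocks U ↔ G.IsBlock U C := by
  simp [blocks]

lemma cliqueSum_congr (h : ∀ a ∈ U, ∀ b ∈ U, G.Adj a b ↔ G'.Adj a b) :
    G.cliqueSum U = G'.cliqueSum U := by
  have hblock : ∀ C, G.IsBlock U C ↔ G'.IsBlock U C := fun C =>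
    and_congr_right fun hCU => and_congr_right fun _ =>
      forall₂_congr fun a ha => forall₂_congr fun b hb => imp_congr_right fun _ =>
        h a (hCU ha) b (hCU hb)
  have hsys : G.cliqueSystems U = G'.cliqueSystems U := by
    ext S
    simp only [mem_cliqueSystems, IsCliqueSystem, hblock]
  ext x
  rw [cliqueSum, cliqueSum, hsys]

lemma cliqueSum_empty (G : SimpleGraph V) (x : ℝ) : G.cliqueSum ∅ x = 1 := by
  have : G.cliqueSystems ∅ = {∅} := by
    ext S
    simp only [mem_cliqueSystems, mem_singleton, IsCliqueSystem, IsBlock, subset_empty]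
    refine ⟨fun hS => eq_empty_of_forall_notMem fun C hC => ?_, ?_⟩
    · obtain ⟨rfl, h2, -⟩ := hS.1 C hC
      simp at h2
    · rintro rfl
      simp
  simp [cliqueSum, this]

lemma cliqueSum_zero (G : SimpleGraph V) (U : Finset V) : G.cliqueSum U 0 = 1 := by
  rw [cliqueSum, sum_eq_single ∅]
  · simp
  · intro S hS hS0
    obtain ⟨C, hC⟩ := nonempty_iff_ne_empty.mpr hS0
    have := ((mem_cliqueSystems.mp hS).1 C hC).2.1
    exact prod_eq_zero hC (by simp; omega)
  · simp [IsCliqueSystem]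

lemma cliqueSum_contractCommon_of_notMem {p q : V} {W : Finset V} (hp : p ∉ W) (hq : q ∉ W) :
    (G.contractCommon p q).cliqueSum W = G.cliqueSum W :=
  cliqueSum_congr fun a ha b hb => contractCommon_adj_iff (by grind) (by grind)

lemma cliqueSum_deleteEdges_of_not_subset {p q : V} (h : ¬(p ∈ U ∧ q ∈ U)) :
    (G.deleteEdges {s(p, q)}).cliqueSum U = G.cliqueSum U := by
  refine cliqueSum_congr fun a ha b hb => ?_
  simp only [deleteEdges_adj, Set.mem_singleton_iff, Sym2.eq_iff, and_iff_left_iff_imp]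
  rintro - (⟨rfl, rfl⟩ | ⟨rfl, rfl⟩)
  exacts [h ⟨ha, hb⟩, h ⟨hb, ha⟩]

def PosUpTo (G : SimpleGraph V) (x : ℝ) : Prop :=
  ∀ W : Finset V, ∀ y ∈ Set.Icc 0 x, 0 < G.cliqueSum W y

lemma PosUpTo.exists_gt (hx : 0 ≤ x) (h : G.PosUpTo x) : ∃ x' > x, G.PosUpTo x' := by
  have hev : ∀ᶠ y in nhds x, ∀ W : Finset V, 0 < G.cliqueSum W y :=
    Filter.eventually_all.mpr fun W =>
      (continuous_cliqueSum G W).continuousAt.eventually_const_lt (h W x ⟨hx, le_rfl⟩)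
  obtain ⟨ε, hε, hball⟩ := Metric.eventually_nhds_iff.mp hev
  refine ⟨x + ε / 2, by linarith, fun W y hy => ?_⟩
  rcases le_or_gt y x with hyx | hyx
  · exact h W y ⟨hy.1, hyx⟩
  · exact hball (by rw [Real.dist_eq, abs_lt]; constructor <;> linarith [hy.2]) W

noncomputable def criticalValue (G : SimpleGraph V) : ℝ :=
  sSup {x | G.PosUpTo x}

lemma posUpTo_zero (G : SimpleGraph V) : G.PosUpTo 0 := fun W y hy => by
  rw [le_antisymm hy.2 hy.1, cliqueSum_zero]
  exact one_pos

lemma posUpTo_of_lt_criticalValue (hx : x < G.criticalValue) : G.PosUpTo x := by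
  obtain ⟨z, hz, hxz⟩ := exists_lt_of_lt_csSup ⟨0, posUpTo_zero G⟩ hx
  exact fun W y hy => hz W y ⟨hy.1, hy.2.trans hxz.le⟩

lemma criticalValue_le_of_cliqueSum_eq_zero {W : Finset V} (hx : 0 ≤ x)
    (h : G.cliqueSum W x = 0) : G.criticalValue ≤ x := by
  by_contra! hlt
  exact (posUpTo_of_lt_criticalValue hlt W x ⟨hx, le_rfl⟩).ne' h

variable [DecidableEq V]

lemma cliqueSum_pair {p q : V} (hpq : G.Adj p q) (x : ℝ) : G.cliqueSum {p, q} x = 1 - x := by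
  have hcard : #{p, q} = 2 := card_pair hpq.ne
  have : G.cliqueSystems {p, q} = {∅, {{p, q}}} := by
    ext S
    simp only [mem_cliqueSystems, mem_insert, mem_singleton]
    constructor
    · refine fun hS => subset_singleton_iff.mp fun C hC => mem_singleton.mpr ?_
      exact eq_of_subset_of_card_le (hS.1 C hC).1 (by rw [hcard]; exact (hS.1 C hC).2.1)
    · rintro (rfl | rfl)
      · simp [IsCliqueSystem]
      · exact ⟨by simp [IsBlock, hcard, hpq], by simp⟩
  rw [cliqueSum, this, sum_pair (by simp), prod_empty, prod_singleton, hcard]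
  ring

lemma sum_cliqueSystems_of_mem {C : Finset V} (hC : G.IsBlock U C) (x : ℝ) :
    ∑ S ∈ G.cliqueSystems U with C ∈ S, ∏ D ∈ S, (-x) ^ (#D - 1) =
      (-x) ^ (#C - 1) * G.cliqueSum (U \ C) x := by
  have hCS {S} (hS : S ∈ G.cliqueSystems (U \ C)) : C ∉ S :=
    notMem_of_isCliqueSystem_sdiff hC.nonempty (mem_cliqueSystems.mp hS)
  rw [cliqueSum, mul_sum]
  symm
  refine sum_nbij' (insert C) (fun S => S.erase C) (fun S hS => ?_) (fun S hS => ?_)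
    (fun S hS => erase_insert (hCS hS)) (fun S hS => insert_erase (mem_filter.mp hS).2)
    (fun S hS => by rw [prod_insert (hCS hS)])
  · simpa using (mem_cliqueSystems.mp hS).insert hC
  · simp only [mem_filter, mem_cliqueSystems] at hS
    simpa using hS.1.erase hS.2

/-- At most one block of a clique system contains the nonempty set `T`; sort the systems by it. -/
lemma sum_cliqueSystems_exists_superset {T : Finset V} (hT : T.Nonempty) (x : ℝ) :
    ∑ S ∈ G.cliqueSystems U with ∃ C ∈ S, T ⊆ C, ∏ D ∈ S, (-x) ^ (#D - 1) =
      ∑ C ∈ G.blocks U with T ⊆ C, (-x) ^ (#C - 1) * G.cliqueSum (U \ C) x := by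
  have hsplit : {S ∈ G.cliqueSystems U | ∃ C ∈ S, T ⊆ C} =
      {C ∈ G.blocks U | T ⊆ C}.biUnion fun C => {S ∈ G.cliqueSystems U | C ∈ S} := by
    ext S
    simp only [mem_filter, mem_biUnion, mem_blocks, mem_cliqueSystems]
    exact ⟨fun ⟨hS, C, hCS, hTC⟩ => ⟨C, ⟨hS.1 C hCS, hTC⟩, hS, hCS⟩,
      fun ⟨C, ⟨_, hTC⟩, hS, hCS⟩ => ⟨hS, C, hCS, hTC⟩⟩
  rw [hsplit, sum_biUnion]
  · exact sum_congr rfl fun C hC =>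
      sum_cliqueSystems_of_mem (mem_blocks.mp (mem_filter.mp hC).1) x
  · intro C hC D hD hCD
    rw [Function.onFun, Finset.disjoint_left]
    simp only [mem_filter, mem_cliqueSystems]
    rintro S ⟨hS, hCS⟩ ⟨-, hDS⟩
    obtain ⟨t, ht⟩ := hT
    rw [mem_coe, mem_filter] at hC hD
    exact Finset.disjoint_left.mp (hS.2 hCS hDS hCD) (hC.2 ht) (hD.2 ht)

theorem cliqueSum_eq_erase_add (v : V) (x : ℝ) :
    G.cliqueSum U x = G.cliqueSum (U.erase v) x +
      ∑ C ∈ G.blocks U with v ∈ C, (-x) ^ (#C - 1) * G.cliqueSum (U \ C) x := by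
  have hfree : {S ∈ G.cliqueSystems U | ¬∃ C ∈ S, {v} ⊆ C} = G.cliqueSystems (U.erase v) := by
    ext S
    simp only [mem_filter, mem_cliqueSystems, IsCliqueSystem, IsBlock, subset_erase,
      singleton_subset_iff, not_exists, not_and]
    exact ⟨fun ⟨⟨h, hd⟩, hv⟩ => ⟨fun C hC => ⟨⟨(h C hC).1, hv C hC⟩, (h C hC).2⟩, hd⟩,
      fun ⟨h, hd⟩ => ⟨⟨fun C hC => ⟨(h C hC).1.1, (h C hC).2⟩, hd⟩, fun C hC => (h C hC).1.2⟩⟩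
  rw [cliqueSum, ← sum_filter_not_add_sum_filter _ (fun S => ∃ C ∈ S, {v} ⊆ C), hfree,
    sum_cliqueSystems_exists_superset (singleton_nonempty v)]
  simp only [singleton_subset_iff, cliqueSum]

lemma cliqueSum_erase_of_forall_not_adj {v : V} (hv : ∀ w ∈ U, ¬G.Adj v w) (x : ℝ) :
    G.cliqueSum U x = G.cliqueSum (U.erase v) x := by
  rw [cliqueSum_eq_erase_add v, add_eq_left]
  refine sum_eq_zero fun C hC => absurd hC ?_
  simp only [mem_filter, mem_blocks, not_and]
  intro hC hvC
  obtain ⟨w, hwC, hwv⟩ := exists_mem_ne hC.2.1 v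
  exact hv w (hC.1 hwC) (hC.2.2 hvC hwC hwv.symm)

/-- The blocks of `G` through `p` and `q` other than `{p, q}` itself correspond, by removing `q`,
to the blocks of `G.contractCommon p q` through `p`. -/
lemma sum_blocks_ssuperset_pair {p q : V} (hpq : G.Adj p q) (hq : q ∈ U) (x : ℝ) :
    ∑ C ∈ ({C ∈ G.blocks U | {p, q} ⊆ C}).erase {p, q}, (-x) ^ (#C - 1) * G.cliqueSum (U \ C) x =
      ∑ C ∈ (G.contractCommon p q).blocks (U.erase q) with p ∈ C,
        -x * ((-x) ^ (#C - 1) * (G.contractCommon p q).cliqueSum ((U.erase q) \ C) x) := by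
  set K := G.contractCommon p q
  have hbig {C} (hC : C ∈ ({C ∈ G.blocks U | {p, q} ⊆ C}).erase {p, q}) :
      G.IsBlock U C ∧ p ∈ C ∧ q ∈ C ∧ 3 ≤ #C := by
    simp only [mem_erase, mem_filter, mem_blocks, insert_subset_iff, singleton_subset_iff] at hC
    obtain ⟨hne, hCb, hpC, hqC⟩ := hC
    have : #{p, q} < #C := card_lt_card <| ssubset_of_subset_of_ne
      (by simp [insert_subset_iff, hpC, hqC]) (Ne.symm hne)
    exact ⟨hCb, hpC, hqC, by rw [card_pair hpq.ne] at this; omega⟩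
  have hsmall {C} (hC : C ∈ ({C ∈ K.blocks (U.erase q) | p ∈ C})) :
      K.IsBlock (U.erase q) C ∧ p ∈ C ∧ q ∉ C := by
    simp only [mem_filter, mem_blocks] at hC
    exact ⟨hC.1, hC.2, fun h => notMem_erase q U (hC.1.1 h)⟩
  refine sum_nbij' (fun C => C.erase q) (insert q) (fun C hC => ?_) (fun C hC => ?_)
    (fun C hC => insert_erase (hbig hC).2.2.1) (fun C hC => erase_insert (hsmall hC).2.2)
    (fun C hC => ?_)
  · obtain ⟨⟨hCU, -, hcl⟩, hpC, hqC, hcard⟩ := hbig hC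
    have hpC' : p ∈ C.erase q := mem_erase.mpr ⟨hpq.ne, hpC⟩
    simp only [mem_filter, mem_blocks, IsBlock]
    refine ⟨⟨erase_subset_erase q hCU, by rw [card_erase_of_mem hqC]; omega, ?_⟩, hpC'⟩
    rwa [isClique_contractCommon_iff hpq hpC' (notMem_erase q C), insert_erase hqC]
  · obtain ⟨⟨hCU, hcard, hcl⟩, hpC, hqC⟩ := hsmall hC
    have hcard' : #(insert q C) = #C + 1 := card_insert_of_notMem hqC
    simp only [mem_erase, mem_filter, mem_blocks, IsBlock]
    refine ⟨fun h => by rw [h, card_pair hpq.ne] at hcard'; omega,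
      ⟨insert_subset hq (hCU.trans (erase_subset q U)), by omega, ?_⟩, ?_⟩
    · exact (isClique_contractCommon_iff hpq hpC hqC).mp hcl
    · simp [insert_subset_iff, hpC]
  · obtain ⟨-, hpC, hqC, hcard⟩ := hbig hC
    obtain ⟨k, hk⟩ := Nat.exists_eq_add_of_le' hcard
    have hU' : (U.erase q) \ (C.erase q) = U \ C := by grind
    rw [hU', cliqueSum_contractCommon_of_notMem (by simp [hpC]) (by simp [hqC]),
      card_erase_of_mem hqC, hk, show k + 3 - 1 = k + 1 + 1 by omega, Nat.add_sub_cancel,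
      pow_succ]
    ring

lemma sum_blocks_superset_pair {p q : V} (hpq : G.Adj p q) (hp : p ∈ U) (hq : q ∈ U) (x : ℝ) :
    ∑ C ∈ G.blocks U with {p, q} ⊆ C, (-x) ^ (#C - 1) * G.cliqueSum (U \ C) x =
      -x * (G.contractCommon p q).cliqueSum (U.erase q) x := by
  have hpair : G.IsBlock U {p, q} := by
    simp [IsBlock, insert_subset_iff, hp, hq, card_pair hpq.ne, hpq]
  have hU : (U.erase q).erase p = U \ {p, q} := by grind
  rw [cliqueSum_eq_erase_add p, hU, cliqueSum_contractCommon_of_notMem (by simp) (by simp),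
    ← add_sum_erase _ _ (mem_filter.mpr ⟨mem_blocks.mpr hpair, subset_rfl⟩), mul_add, mul_sum,
    card_pair hpq.ne, sum_blocks_ssuperset_pair hpq hq]
  ring

theorem cliqueSum_deleteEdges {p q : V} (hpq : G.Adj p q) (hp : p ∈ U) (hq : q ∈ U) (x : ℝ) :
    (G.deleteEdges {s(p, q)}).cliqueSum U x =
      G.cliqueSum U x + x * (G.contractCommon p q).cliqueSum (U.erase q) x := by
  have hsys : (G.deleteEdges {s(p, q)}).cliqueSystems U =
      {S ∈ G.cliqueSystems U | ¬∃ C ∈ S, {p, q} ⊆ C} := by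
    ext S
    simp only [mem_filter, mem_cliqueSystems, IsCliqueSystem, IsBlock,
      isClique_deleteEdges_pair_iff hpq.ne, not_exists, not_and]
    grind
  have hsplit := sum_filter_not_add_sum_filter (G.cliqueSystems U)
    (fun S => ∃ C ∈ S, {p, q} ⊆ C) (fun S => ∏ D ∈ S, (-x) ^ (#D - 1))
  rw [sum_cliqueSystems_exists_superset (insert_nonempty p {q}),
    sum_blocks_superset_pair hpq hp hq, ← hsys] at hsplit
  rw [cliqueSum, cliqueSum, ← hsplit]
  ring

lemma cliqueSum_deleteIncidenceSet (q : V) (W : Finset V) :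
    (G.deleteIncidenceSet q).cliqueSum W = G.cliqueSum (W.erase q) := by
  ext x
  rw [cliqueSum_erase_of_forall_not_adj fun w _ h => (deleteIncidenceSet_adj.mp h).2.1 rfl]
  refine congrFun (cliqueSum_congr fun a ha b hb => ?_) x
  simp [deleteIncidenceSet_adj, ne_of_mem_erase ha, ne_of_mem_erase hb]

lemma cliqueSum_le_cliqueSum_deleteEdges {p q : V} (hx : 0 ≤ x)
    (hK : ∀ W, 0 ≤ (G.contractCommon p q).cliqueSum W x) :
    G.cliqueSum U x ≤ (G.deleteEdges {s(p, q)}).cliqueSum U x := by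
  by_cases hpq : G.Adj p q
  · by_cases hU : p ∈ U ∧ q ∈ U
    · rw [cliqueSum_deleteEdges hpq hU.1 hU.2]
      exact le_add_of_nonneg_right (mul_nonneg hx (hK _))
    · rw [cliqueSum_deleteEdges_of_not_subset hU]
  · rw [deleteEdges_eq_self.mpr (by simpa using hpq)]

/-- Deleting an edge `pq` adds `y * (G.contractCommon p q).cliqueSum`, and `G.contractCommon p q`
is smaller than `G`, so positivity passes to subgraphs by induction. -/
theorem PosUpTo.anti {K : SimpleGraph V} (hKG : K ≤ G) (hG : G.PosUpTo x) : K.PosUpTo x := by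
  induction G using WellFoundedLT.induction generalizing K with
  | ind G ih =>
  obtain rfl | hlt := hKG.eq_or_lt
  · exact hG
  obtain ⟨p, q, hpq, hKpq⟩ := exists_adj_not_adj_of_lt hlt
  have hcon : (G.contractCommon p q).PosUpTo x :=
    ih _ (deleteIncidenceSet_lt_of_adj hpq) (contractCommon_le_deleteIncidenceSet G p q)
      fun W y hy => by rw [cliqueSum_deleteIncidenceSet]; exact hG _ y hy
  refine ih _ (deleteEdges_lt_of_adj hpq) ?_ fun W y hy => (hG W y hy).trans_le
    (cliqueSum_le_cliqueSum_deleteEdges hy.1 fun W' => (hcon W' y hy).le)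
  exact le_deleteEdges_of_not_adj hKG hKpq

theorem cliqueSum_le_of_le {K : SimpleGraph V} (hKG : K ≤ G) (hx : 0 ≤ x)
    (hG : ∀ K ≤ G, ∀ W, 0 ≤ K.cliqueSum W x) (U : Finset V) :
    G.cliqueSum U x ≤ K.cliqueSum U x := by
  induction G using WellFoundedLT.induction generalizing K with
  | ind G ih =>
  obtain rfl | hlt := hKG.eq_or_lt
  · exact le_rfl
  obtain ⟨p, q, hpq, hKpq⟩ := exists_adj_not_adj_of_lt hlt
  have hdel := deleteEdges_lt_of_adj hpq
  refine (cliqueSum_le_cliqueSum_deleteEdges hx (hG _ (contractCommon_le G p q))).trans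
    (ih _ hdel (le_deleteEdges_of_not_adj hKG hKpq) fun K' hK' => hG K' (hK'.trans hdel.le))

lemma PosUpTo.lt_one (hG : G ≠ ⊥) (h : G.PosUpTo x) : x < 1 := by
  obtain ⟨p, q, hpq⟩ := ne_bot_iff_exists_adj.mp hG
  by_contra! hx
  have := h {p, q} 1 ⟨zero_le_one, hx⟩
  rw [cliqueSum_pair hpq, sub_self] at this
  exact this.false

lemma PosUpTo.le_criticalValue (hG : G ≠ ⊥) (h : G.PosUpTo x) : x ≤ G.criticalValue :=
  le_csSup ⟨1, fun _ hy => (PosUpTo.lt_one hG hy).le⟩ h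

lemma criticalValue_pos (hG : G ≠ ⊥) : 0 < G.criticalValue := by
  obtain ⟨x, hx, h⟩ := (posUpTo_zero G).exists_gt le_rfl
  exact hx.trans_le (h.le_criticalValue hG)

lemma criticalValue_anti {K : SimpleGraph V} (hK : K ≠ ⊥) (hKG : K ≤ G) :
    G.criticalValue ≤ K.criticalValue :=
  csSup_le_csSup ⟨1, fun _ hy => (PosUpTo.lt_one hK hy).le⟩ ⟨0, posUpTo_zero G⟩
    fun _ h => h.anti hKG

lemma cliqueSum_criticalValue_nonneg (hG : G ≠ ⊥) {K : SimpleGraph V} (hKG : K ≤ G)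
    (W : Finset V) : 0 ≤ K.cliqueSum W G.criticalValue :=
  nonneg_of_pos_on_Ico (continuous_cliqueSum K W) (criticalValue_pos hG) fun y hy =>
    (posUpTo_of_lt_criticalValue hy.2).anti hKG W y ⟨hy.1, le_rfl⟩

lemma exists_cliqueSum_criticalValue_eq_zero (hG : G ≠ ⊥) :
    ∃ W, G.cliqueSum W G.criticalValue = 0 := by
  by_contra! h
  have hpos : G.PosUpTo G.criticalValue := fun W y hy => by
    rcases hy.2.lt_or_eq with hlt | rfl
    · exact posUpTo_of_lt_criticalValue hlt W y ⟨hy.1, le_rfl⟩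
    · exact (cliqueSum_criticalValue_nonneg hG le_rfl W).lt_of_ne (h W).symm
  obtain ⟨x', hx', h'⟩ := hpos.exists_gt (criticalValue_pos hG).le
  exact (h'.le_criticalValue hG).not_gt hx'

/-- Cut all edges at `b` except `bu`: this can only increase the sum, and then deleting `bu`
as well isolates `b`, which by the edge deletion formula shows that the sum is negative. -/
theorem cliqueSum_neg_of_erase_eq_zero (hx : 0 < x) (hG : ∀ K ≤ G, ∀ W, 0 ≤ K.cliqueSum W x)
    {b u : V} (hbu : G.Adj b u) (hb : b ∈ U) (hu : u ∈ U) (h0 : G.cliqueSum (U.erase b) x = 0)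
    (hpos : 0 < G.cliqueSum ((U.erase b).erase u) x) : G.cliqueSum U x < 0 := by
  set F := G.deleteEdges {e | b ∈ e ∧ u ∉ e}
  have hFbu : F.Adj b u := by simp [F, hbu]
  have hdel : F.deleteEdges {s(b, u)} = G.deleteIncidenceSet b := by
    ext a c
    simp only [F, deleteEdges_adj, deleteIncidenceSet_adj, Set.mem_ofPred_eq,
      Set.mem_singleton_iff, Sym2.mem_iff, Sym2.eq_iff]
    have := hbu.ne
    have : G.Adj a c → a ≠ c := fun h => h.ne
    grind
  have hcon : (F.contractCommon b u).cliqueSum (U.erase u) x =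
      G.cliqueSum ((U.erase b).erase u) x := by
    rw [cliqueSum_erase_of_forall_not_adj (v := b) (fun w _ h => ?_), erase_right_comm]
    · refine congrFun (cliqueSum_congr fun a ha c hc => ?_) x
      rw [contractCommon_adj_iff (by simp; grind) (by simp; grind)]
      simp only [F, deleteEdges_adj, Set.mem_ofPred_eq, Sym2.mem_iff]
      grind
    · simp only [contractCommon_adj, F, deleteEdges_adj, Set.mem_ofPred_eq, Sym2.mem_iff] at h
      grind
  have hF := cliqueSum_deleteEdges hFbu hb hu x
  rw [hdel, cliqueSum_deleteIncidenceSet, h0, hcon] at hF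
  calc G.cliqueSum U x ≤ F.cliqueSum U x := cliqueSum_le_of_le (deleteEdges_le _) hx.le hG U
    _ < 0 := by nlinarith

theorem cliqueSum_criticalValue_pos (hc : G.Connected) (hG : G ≠ ⊥) {W : Finset V}
    (hW : W ≠ univ) : 0 < G.cliqueSum W G.criticalValue := by
  induction W using Finset.strongInduction with
  | H W ih =>
  refine (cliqueSum_criticalValue_nonneg hG le_rfl W).lt_of_ne fun h => ?_
  obtain ⟨c, hcW⟩ : ∃ c, c ∉ W := by simpa [eq_univ_iff_forall] using hW
  obtain rfl | ⟨a, haW⟩ := W.eq_empty_or_nonempty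
  · rw [cliqueSum_empty] at h
    exact one_ne_zero h.symm
  obtain ⟨d, -, hd, hd'⟩ := (hc.preconnected a c).some.exists_boundary_dart (W : Set V) haW hcW
  have hpos : 0 < G.cliqueSum (W.erase d.fst) G.criticalValue :=
    ih _ (erase_ssubset hd) fun h' => hcW (mem_of_mem_erase (eq_univ_iff_forall.mp h' c))
  have hneg := cliqueSum_neg_of_erase_eq_zero (criticalValue_pos hG)
    (fun K hK => cliqueSum_criticalValue_nonneg hG hK) d.adj.symm (mem_insert_self d.snd W)
    (mem_insert_of_mem hd) (by rw [erase_insert hd']; exact h.symm)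
    (by rw [erase_insert hd']; exact hpos)
  exact hneg.not_ge (cliqueSum_criticalValue_nonneg hG le_rfl _)

theorem cliqueSum_univ_criticalValue_eq_zero (hc : G.Connected) (hG : G ≠ ⊥) :
    G.cliqueSum univ G.criticalValue = 0 := by
  obtain ⟨W, hW⟩ := exists_cliqueSum_criticalValue_eq_zero hG
  obtain rfl : W = univ := by
    by_contra hne
    exact (cliqueSum_criticalValue_pos hc hG hne).ne' hW
  exact hW

theorem criticalValue_lt_of_le_deleteEdges (hc : G.Connected) {p q : V} (hpq : G.Adj p q)
    {K : SimpleGraph V} (hK : K ≠ ⊥) (hKG : K ≤ G.deleteEdges {s(p, q)}) :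
    G.criticalValue < K.criticalValue := by
  have hG : G ≠ ⊥ := ne_bot_iff_exists_adj.mpr ⟨p, q, hpq⟩
  set β := G.criticalValue
  have hβ := criticalValue_pos hG
  have hcon : 0 < (G.contractCommon p q).cliqueSum (univ.erase q) β := by
    refine PosUpTo.anti (contractCommon_le_deleteIncidenceSet G p q) (fun W y hy => ?_) _ β
      ⟨hβ.le, le_rfl⟩
    rw [cliqueSum_deleteIncidenceSet]
    rcases hy.2.lt_or_eq with hlt | rfl
    · exact posUpTo_of_lt_criticalValue hlt _ y ⟨hy.1, le_rfl⟩
    · exact cliqueSum_criticalValue_pos hc hG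
        fun h => notMem_erase q W (eq_univ_iff_forall.mp h q)
  have hG₁ : (G.deleteEdges {s(p, q)}).PosUpTo β := by
    intro W y hy
    rcases hy.2.lt_or_eq with hlt | rfl
    · exact (posUpTo_of_lt_criticalValue hlt).anti (deleteEdges_le _) W y ⟨hy.1, le_rfl⟩
    by_cases hW : p ∈ W ∧ q ∈ W
    · rw [cliqueSum_deleteEdges hpq hW.1 hW.2]
      have hZ := cliqueSum_criticalValue_nonneg hG le_rfl W
      have hZc := cliqueSum_criticalValue_nonneg hG (contractCommon_le G p q) (W.erase q)
      obtain rfl | hne := eq_or_ne W univ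
      · nlinarith
      · nlinarith [cliqueSum_criticalValue_pos hc hG hne]
    · rw [cliqueSum_deleteEdges_of_not_subset hW]
      exact cliqueSum_criticalValue_pos hc hG fun h => hW (by simp [h])
  obtain ⟨x, hx, hG₁x⟩ := hG₁.exists_gt hβ.le
  calc β < x := hx
    _ ≤ (G.deleteEdges {s(p, q)}).criticalValue :=
      hG₁x.le_criticalValue (ne_bot_of_le_ne_bot hK hKG)
    _ ≤ K.criticalValue := criticalValue_anti hK hKG

end Fintype

section Comap

variable {W : Type*} (f : W ↪ V)

lemma isClique_comap_iff {C : Finset W} :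
    (G.comap f).IsClique (C : Set W) ↔ G.IsClique (C.map f : Set V) := by
  simp [isClique_iff, Set.Pairwise]

lemma isCliqueSystem_comap_iff {U : Finset W} {S : Finset (Finset W)} :
    (G.comap f).IsCliqueSystem U S ↔
      G.IsCliqueSystem (U.map f) (S.map (mapEmbedding f).toEmbedding) := by
  have hinj : Set.InjOn (mapEmbedding f) (S : Set (Finset W)) :=
    (mapEmbedding f).injective.injOn
  simp only [IsCliqueSystem, IsBlock, forall_mem_map, coe_map, RelEmbedding.coe_toEmbedding,
    mapEmbedding_apply, map_subset_map, card_map, isClique_comap_iff,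
    hinj.pairwiseDisjoint_image]
  exact and_congr_right fun _ => forall₂_congr fun _ _ => forall₂_congr fun _ _ =>
    imp_congr_right fun _ => (disjoint_map f).symm

variable [Fintype V] [Fintype W]

lemma cliqueSum_comap (G : SimpleGraph V) (U : Finset W) :
    (G.comap f).cliqueSum U = G.cliqueSum (U.map f) := by
  have hsys : G.cliqueSystems (U.map f) =
      ((G.comap f).cliqueSystems U).map
        (mapEmbedding (mapEmbedding f).toEmbedding).toEmbedding := by
    ext S'
    simp only [mem_map, mem_cliqueSystems, RelEmbedding.coe_toEmbedding, mapEmbedding_apply]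
    constructor
    · intro hS'
      obtain ⟨S, -, rfl⟩ := subset_map_iff.mp fun C' hC' => by
        obtain ⟨C, -, rfl⟩ := subset_map_iff.mp (hS'.1 C' hC').1
        exact mem_map_of_mem (mapEmbedding f).toEmbedding (mem_univ C)
      exact ⟨S, (isCliqueSystem_comap_iff f).mpr hS', rfl⟩
    · rintro ⟨S, hS, rfl⟩
      exact (isCliqueSystem_comap_iff f).mp hS
  ext x
  simp [cliqueSum, hsys, sum_map, prod_map]

end Comap

section AdjointPolynomial

variable [Fintype V] [DecidableEq V]

open scoped Classical in
noncomputable def cliqueCovers (G : SimpleGraph V) : Finset (Finpartition (univ : Finset V)) :=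
  {P | G.IsCliqueCover P}

lemma numCliqueCovers_eq_card (G : SimpleGraph V) (k : ℕ) :
    numCliqueCovers G k = #{P ∈ G.cliqueCovers | #P.parts = k} := by
  rw [numCliqueCovers, ← Set.ncard_coe_finset]
  congr 1
  ext P
  simp [cliqueCovers]

lemma isCliqueCover_iff {P : Finpartition (univ : Finset V)} :
    G.IsCliqueCover P ↔ G.IsCliqueSystem univ P.nontrivialParts := by
  refine ⟨fun h => ⟨fun C hC => ?_, P.supIndep.pairwiseDisjoint.subset (filter_subset _ _)⟩,
    fun h C hC => ?_⟩
  · obtain ⟨hCP, hC2⟩ := Finpartition.mem_nontrivialParts.mp hC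
    exact ⟨subset_univ C, hC2, h C hCP⟩
  · by_cases hC2 : 2 ≤ #C
    · exact (h.1 C (Finpartition.mem_nontrivialParts.mpr ⟨hC, hC2⟩)).2.2
    · exact IsClique.of_subsingleton fun a ha b hb => card_le_one.mp (by omega) a ha b hb

theorem eval_adjPoly (G : SimpleGraph V) {t : ℝ} (ht : t ≠ 0) :
    (adjPoly G).eval t = t ^ Fintype.card V * G.cliqueSum univ t⁻¹ := by
  set n := Fintype.card V
  have hcovers :
      (adjPoly G).eval t = ∑ P ∈ G.cliqueCovers, (-1) ^ (n - #P.parts) * t ^ #P.parts := by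
    rw [adjPoly, eval_finsetSum, ← sum_fiberwise_of_maps_to (s := G.cliqueCovers)
      (t := range (n + 1)) (g := fun P => #P.parts)
      fun P _ => mem_range_succ_iff.mpr (P.card_parts_le_card.trans card_univ.le)]
    refine sum_congr rfl fun k _ => ?_
    rw [numCliqueCovers_eq_card]
    simp only [eval_mul, eval_C, eval_pow, eval_X]
    rw [sum_congr rfl fun P hP => by rw [(mem_filter.mp hP).2], sum_const, nsmul_eq_mul]
    ring
  rw [hcovers, cliqueSum, mul_sum]
  refine sum_bij' (fun P _ => P.nontrivialParts)
    (fun S hS => Finpartition.ofNontrivialParts S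
      (fun C hC => ⟨subset_univ C, ((mem_cliqueSystems.mp hS).1 C hC).2.1⟩)
      (mem_cliqueSystems.mp hS).2)
    (fun P hP => ?_) (fun S hS => ?_) (fun P _ => P.ofNontrivialParts_nontrivialParts)
    (fun S _ => Finpartition.nontrivialParts_ofNontrivialParts _ _) (fun P _ => ?_)
  · simpa [cliqueCovers, isCliqueCover_iff] using hP
  · simpa [cliqueCovers, isCliqueCover_iff, Finpartition.nontrivialParts_ofNontrivialParts]
      using hS
  · have hsum : #P.parts + ∑ C ∈ P.nontrivialParts, (#C - 1) = n := by
      simpa using P.card_parts_add_sum_nontrivialParts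
    rw [prod_pow_eq_pow_sum, ← hsum, Nat.add_sub_cancel_left]
    generalize ∑ C ∈ P.nontrivialParts, (#C - 1) = m
    rw [pow_add, neg_eq_neg_one_mul t⁻¹, mul_pow, inv_pow]
    field_simp

lemma eval_adjPoly_inv_criticalValue (hc : G.Connected) (hG : G ≠ ⊥) :
    (adjPoly G).eval G.criticalValue⁻¹ = 0 := by
  rw [eval_adjPoly G (inv_ne_zero (criticalValue_pos hG).ne'), inv_inv,
    cliqueSum_univ_criticalValue_eq_zero hc hG, mul_zero]

lemma le_inv_criticalValue_of_eval_adjPoly_comap {W : Type*} [Fintype W] [DecidableEq W]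
    (f : W ↪ V) (hG : G ≠ ⊥) {t : ℝ} (ht : 0 < t) (h : (adjPoly (G.comap f)).eval t = 0) :
    t ≤ G.criticalValue⁻¹ := by
  rw [eval_adjPoly _ ht.ne', cliqueSum_comap, mul_eq_zero] at h
  exact (le_inv_comm₀ ht (criticalValue_pos hG)).mpr <| criticalValue_le_of_cliqueSum_eq_zero
    (inv_nonneg.mpr ht.le) (h.resolve_left (pow_ne_zero _ ht.ne'))

end AdjointPolynomial

lemma Subgraph.exists_adj_not_adj_of_ne_top {H : G.Subgraph} (hG : ∀ v, ∃ w, G.Adj v w)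
    (hH : H ≠ ⊤) : ∃ p q, G.Adj p q ∧ ¬H.Adj p q := by
  by_contra! h
  refine hH (Subgraph.ext (Set.eq_univ_of_forall fun v => ?_) ?_)
  · obtain ⟨w, hw⟩ := hG v
    exact (h v w hw).fst_mem
  · ext a b
    exact ⟨fun hab => H.adj_sub hab, h a b⟩

end SimpleGraph

/-- for connected `G` with an edge and a proper subgraph `H` with an edge,
`γ(H) < γ(G)`. -/
theorem stmt17 {V : Type*} [Fintype V] [DecidableEq V] (G : SimpleGraph V)
    (hc : G.Connected) (he : ∃ a b, G.Adj a b)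
    (H : G.Subgraph) [Fintype H.verts] (hne : H ≠ ⊤) (heH : ∃ a b, H.Adj a b)
    (gH gG : ℝ) (hgH : IsGammaZero (adjPoly H.coe) gH)
    (hgG : IsGammaZero (adjPoly G) gG) :
    gH < gG := by
  have hG : G ≠ ⊥ := SimpleGraph.ne_bot_iff_exists_adj.mpr he
  have : Nontrivial V := let ⟨a, b, hab⟩ := he; ⟨a, b, hab.ne⟩
  obtain ⟨p, q, hpq, hHpq⟩ :=
    H.exists_adj_not_adj_of_ne_top hc.preconnected.exists_adj_of_nontrivial hne
  set K := H.spanningCoe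
  have hK : K ≠ ⊥ := SimpleGraph.ne_bot_iff_exists_adj.mpr heH
  have hlt : G.criticalValue < K.criticalValue := SimpleGraph.criticalValue_lt_of_le_deleteEdges
    hc hpq hK (SimpleGraph.le_deleteEdges_of_not_adj H.spanningCoe_le hHpq)
  have hβK := (SimpleGraph.criticalValue_pos hG).trans hlt
  calc gH ≤ K.criticalValue⁻¹ := by
        rcases le_or_gt gH 0 with hgH0 | hgH0
        · exact hgH0.trans (inv_pos.mpr hβK).le
        · exact SimpleGraph.le_inv_criticalValue_of_eval_adjPoly_comap
            (Function.Embedding.subtype _) hK hgH0 hgH.1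
    _ < G.criticalValue⁻¹ := (inv_lt_inv₀ hβK (SimpleGraph.criticalValue_pos hG)).mpr hlt
    _ ≤ gG := hgG.2 _ (SimpleGraph.eval_adjPoly_inv_criticalValue hc hG)
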